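/- Let (M_p)_{p≥0} be a sequence of positive reals with M_0 = M_1 = 1 satisfying (M_p/p!)^2 ≤ (M_{p-1}/(p-1)!)·(M_{p+1}/(p+1)!) for all p ≥ 1. Then for all multi-indices α, β ∈ ℕ^d with β ≤ α (componentwise) and 1 ≤ |β| ≤ |α| − 1, the inequality binomial(α, β)·M_{|α−β|}·M_{|β|} ≤ |α|·M_{|α|−1} holds. -/

import Mathlib

/-! With `m p = M p / p!`, condition (M.4) says that `m` is log-convex, i.e. `m (p + 1) / m p` is
nondecreasing. Shifting one unit at a time from the smaller index to the larger one then gives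
`m k * m (n - k) ≤ m 1 * m (n - 1)` for `1 ≤ k ≤ n - 1`, and multiplying by `n!` turns this into
`(n choose k) M_{n-k} M_k ≤ n M_{n-1}`. The multinomial coefficient `(α choose β)` is at most
`(|α| choose |β|)` by Vandermonde's identity. -/

open Finset

theorem Nat.choose_mul_choose_le_choose_add (m n i j : ℕ) :
    m.choose i * n.choose j ≤ (m + n).choose (i + j) := by
  rw [Nat.add_choose_eq]
  exact single_le_sum (f := fun ij : ℕ × ℕ => m.choose ij.1 * n.choose ij.2)
    (fun _ _ => Nat.zero_le _) (mem_antidiagonal.mpr (rfl : (i, j).1 + (i, j).2 = i + j))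

theorem Finset.prod_choose_le_choose_sum {ι : Type*} (s : Finset ι) (f g : ι → ℕ) :
    ∏ i ∈ s, (f i).choose (g i) ≤ (∑ i ∈ s, f i).choose (∑ i ∈ s, g i) := by
  induction s using Finset.cons_induction with
  | empty => simp
  | cons a s ha ih =>
    rw [prod_cons, sum_cons, sum_cons]
    exact (Nat.mul_le_mul_left _ ih).trans (Nat.choose_mul_choose_le_choose_add _ _ _ _)

section LogConvex

variable {m : ℕ → ℝ}

theorem monotone_succ_div_of_sq_le (hpos : ∀ p, 0 < m p)
    (hconv : ∀ p, m (p + 1) ^ 2 ≤ m p * m (p + 2)) : Monotone fun p => m (p + 1) / m p := by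
  refine monotone_nat_of_le_succ fun p => ?_
  rw [div_le_div_iff₀ (hpos p) (hpos (p + 1))]
  nlinarith [hconv p]

theorem mul_le_mul_shift_of_sq_le (hpos : ∀ p, 0 < m p)
    (hconv : ∀ p, m (p + 1) ^ 2 ≤ m p * m (p + 2)) {a b : ℕ} (hab : a ≤ b) :
    m (a + 1) * m (b + 1) ≤ m a * m (b + 2) := by
  have h := monotone_succ_div_of_sq_le hpos hconv (show a ≤ b + 1 by omega)
  rw [div_le_div_iff₀ (hpos a) (hpos (b + 1))] at h
  linarith

theorem mul_le_one_mul_of_sq_le (hpos : ∀ p, 0 < m p)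
    (hconv : ∀ p, m (p + 1) ^ 2 ≤ m p * m (p + 2)) {a b : ℕ} (hab : a ≤ b) :
    m (a + 1) * m (b + 1) ≤ m 1 * m (a + b + 1) := by
  induction a generalizing b with
  | zero => simp
  | succ a ih =>
    calc m (a + 1 + 1) * m (b + 1) ≤ m (a + 1) * m (b + 2) :=
          mul_le_mul_shift_of_sq_le hpos hconv hab
      _ ≤ m 1 * m (a + (b + 1) + 1) := ih (by omega)
      _ = m 1 * m (a + 1 + b + 1) := by ring_nf

theorem mul_sub_le_one_mul_of_sq_le (hpos : ∀ p, 0 < m p)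
    (hconv : ∀ p, m (p + 1) ^ 2 ≤ m p * m (p + 2)) {n k : ℕ} (hk : 1 ≤ k) (hkn : k + 1 ≤ n) :
    m k * m (n - k) ≤ m 1 * m (n - 1) := by
  rcases le_total k (n - k) with h | h
  · have := mul_le_one_mul_of_sq_le hpos hconv (show k - 1 ≤ n - k - 1 by omega)
    rwa [show k - 1 + 1 = k by omega, show n - k - 1 + 1 = n - k by omega,
      show k - 1 + (n - k - 1) + 1 = n - 1 by omega] at this
  · have := mul_le_one_mul_of_sq_le hpos hconv (show n - k - 1 ≤ k - 1 by omega)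
    rwa [show k - 1 + 1 = k by omega, show n - k - 1 + 1 = n - k by omega,
      show n - k - 1 + (k - 1) + 1 = n - 1 by omega, mul_comm (m (n - k))] at this

end LogConvex

theorem choose_mul_mul_le_of_M4 {M : ℕ → ℝ} (hpos : ∀ p, 0 < M p) (h1 : M 1 = 1)
    (hM4 : ∀ p : ℕ, 1 ≤ p →
      (M p / p.factorial) ^ 2 ≤
        (M (p - 1) / (p - 1).factorial) * (M (p + 1) / (p + 1).factorial))
    {n k : ℕ} (hk : 1 ≤ k) (hkn : k + 1 ≤ n) :
    (n.choose k : ℝ) * M (n - k) * M k ≤ n * M (n - 1) := by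
  set m : ℕ → ℝ := fun p => M p / p.factorial with hm
  have hmpos : ∀ p, 0 < m p := fun p => div_pos (hpos p) (by positivity)
  have hconv : ∀ p, m (p + 1) ^ 2 ≤ m p * m (p + 2) := fun p => by
    simpa using hM4 (p + 1) (by omega)
  have hM : ∀ p, M p = p.factorial * m p := fun p => by
    rw [hm]; field_simp
  have hfac : (n.choose k * k.factorial * (n - k).factorial : ℝ) = n * (n - 1).factorial := by
    exact_mod_cast (Nat.choose_mul_factorial_mul_factorial (by omega)).trans
      (Nat.mul_factorial_pred (by omega)).symm
  calc (n.choose k : ℝ) * M (n - k) * M k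
      = (n.choose k * k.factorial * (n - k).factorial : ℝ) * (m k * m (n - k)) := by
        rw [hM (n - k), hM k]; ring
    _ ≤ (n * (n - 1).factorial : ℝ) * (m 1 * m (n - 1)) := by
        rw [hfac]
        gcongr ?_ * ?_
        exact mul_sub_le_one_mul_of_sq_le hmpos hconv hk hkn
    _ = n * M (n - 1) := by
        rw [hM (n - 1), show m 1 = 1 by simp [hm, h1]]; ring

theorem stmt_1_general (d : ℕ) (M : ℕ → ℝ) (hpos : ∀ p, 0 < M p) (h1 : M 1 = 1)
    (hM4 : ∀ p : ℕ, 1 ≤ p →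
      (M p / p.factorial) ^ 2 ≤
        (M (p - 1) / (p - 1).factorial) * (M (p + 1) / (p + 1).factorial))
    (α β : Fin d → ℕ) (hβα : β ≤ α)
    (h1β : 1 ≤ ∑ i, β i) (hβ : ∑ i, β i ≤ (∑ i, α i) - 1) :
    ((∏ i, (α i).choose (β i) : ℕ) : ℝ) * M (∑ i, (α i - β i)) * M (∑ i, β i) ≤
      ((∑ i, α i : ℕ) : ℝ) * M ((∑ i, α i) - 1) := by
  have hsub : ∑ i, (α i - β i) = ∑ i, α i - ∑ i, β i :=
    sum_tsub_distrib univ fun i _ => hβα i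
  have hchoose : ((∏ i, (α i).choose (β i) : ℕ) : ℝ) ≤ ((∑ i, α i).choose (∑ i, β i) : ℕ) := by
    exact_mod_cast prod_choose_le_choose_sum univ α β
  rw [hsub]
  calc ((∏ i, (α i).choose (β i) : ℕ) : ℝ) * M (∑ i, α i - ∑ i, β i) * M (∑ i, β i)
      ≤ ((∑ i, α i).choose (∑ i, β i) : ℕ) * M (∑ i, α i - ∑ i, β i) * M (∑ i, β i) := by
        gcongr <;> exact (hpos _).le
    _ ≤ _ := choose_mul_mul_le_of_M4 hpos h1 hM4 h1β (by omega)

theorem stmt_1 (d : ℕ) (M : ℕ → ℝ) (hpos : ∀ p, 0 < M p) (h0 : M 0 = 1) (h1 : M 1 = 1)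
    (hM4 : ∀ p : ℕ, 1 ≤ p →
      (M p / p.factorial) ^ 2 ≤
        (M (p - 1) / (p - 1).factorial) * (M (p + 1) / (p + 1).factorial))
    (α β : Fin d → ℕ) (hβα : β ≤ α)
    (h1β : 1 ≤ ∑ i, β i) (hβ : ∑ i, β i ≤ (∑ i, α i) - 1) :
    ((∏ i, (α i).choose (β i) : ℕ) : ℝ) * M (∑ i, (α i - β i)) * M (∑ i, β i) ≤
      ((∑ i, α i : ℕ) : ℝ) * M ((∑ i, α i) - 1) :=
  stmt_1_general d M hpos h1 hM4 α β hβα h1β hβ
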